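/- arXiv:2403.09556 — 3 statements merged into one kernel-verified Lean document; each statement's English description precedes it below -/
import Mathlib

section
/- If R is a memoryless alternating simulation relation (WFRR) from S1 to S2 and R is a strict relation (i.e., R(x1) is nonempty for all x1), then R is an alternating simulation relation (ASR) from S1 to S2. -/
open Set

/-- Available inputs of a transition control system given by transition map `F`. -/
def avail {X U : Type*} (F : X → U → Set X) (x : X) : Set U := {u | (F x u).Nonempty}

/-- Image of a set under a relation. -/
def img {X1 X2 : Type*} (R : Set (X1 × X2)) (A : Set X1) : Set X2 :=
  {x2 | ∃ x1 ∈ A, (x1, x2) ∈ R}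

/-- `R` is strict: every concrete state is related to some abstract state. -/
def Strict {X1 X2 : Type*} (R : Set (X1 × X2)) : Prop := ∀ x1, ∃ x2, (x1, x2) ∈ R

/-- Alternating simulation relation. -/
def ASR {X1 U1 X2 U2 : Type*} (F1 : X1 → U1 → Set X1) (F2 : X2 → U2 → Set X2)
    (R : Set (X1 × X2)) : Prop :=
  ∀ x1 x2, (x1, x2) ∈ R → ∀ u2 ∈ avail F2 x2, ∃ u1 ∈ avail F1 x1,
    ∀ x1' ∈ F1 x1 u1, ∃ x2' ∈ F2 x2 u2, (x1', x2') ∈ R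

/-- Memoryless alternating simulation relation. -/
def WFRR {X1 U1 X2 U2 : Type*} (F1 : X1 → U1 → Set X1) (F2 : X2 → U2 → Set X2)
    (R : Set (X1 × X2)) : Prop :=
  ∀ x1 x2, (x1, x2) ∈ R → ∀ u2 ∈ avail F2 x2, ∃ u1 ∈ avail F1 x1,
    ∀ x1' ∈ F1 x1 u1, ∀ x2', (x1', x2') ∈ R → x2' ∈ F2 x2 u2

theorem wfrr_strict_implies_asr {X1 U1 X2 U2 : Type*}
    (F1 : X1 → U1 → Set X1) (F2 : X2 → U2 → Set X2) (R : Set (X1 × X2))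
    (hstrict : Strict R) (h : WFRR F1 F2 R) : ASR F1 F2 R := by
  intro x1 x2 hR u2 hu2
  obtain ⟨u1, hu1, hsucc⟩ := h x1 x2 hR u2 hu2
  refine ⟨u1, hu1, fun x1' hx1' => ?_⟩
  obtain ⟨x2', hR'⟩ := hstrict x1'
  exact ⟨x2', hsucc x1' hx1' x2' hR', hR'⟩
end

section
/- Given a relation R that is an ASR from S1 to S2, define the system S2' = (X2, U2, F2') where F2'(x2,u2) = F2(x2,u2) ∪ ⋃{R(F1(x1,u1)) : (x1,x2,u1,u2) in the ASR extended relation}. Then the available inputs of S2' coincide with those of S2 (U2'(x2) = U2(x2) for all x2), the identity relation on X2 is a WFRR from S2 to S2', and R is a WFRR from S1 to S2'. -/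
open Set

/-- ASR extended relation. -/
def extASR {X1 U1 X2 U2 : Type*} (F1 : X1 → U1 → Set X1) (F2 : X2 → U2 → Set X2)
    (R : Set (X1 × X2)) (x1 : X1) (x2 : X2) (u1 : U1) (u2 : U2) : Prop :=
  (x1, x2) ∈ R ∧ u2 ∈ avail F2 x2 ∧ u1 ∈ avail F1 x1 ∧
    ∀ x1' ∈ F1 x1 u1, ({y | (x1', y) ∈ R} ∩ F2 x2 u2).Nonempty

/-- The WFRR-extension of an abstraction. -/
def extSys {X1 U1 X2 U2 : Type*} (F1 : X1 → U1 → Set X1) (F2 : X2 → U2 → Set X2)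
    (R : Set (X1 × X2)) : X2 → U2 → Set X2 :=
  fun x2 u2 =>
    F2 x2 u2 ∪ ⋃ (x1 : X1) (u1 : U1) (_ : extASR F1 F2 R x1 x2 u1 u2), img R (F1 x1 u1)

/-! The extension only adds successors for inputs `u2` that are already available at `x2`
(an extended tuple requires `u2 ∈ U2(x2)`), so available inputs do not change. For
`(x1, x2) ∈ R` the ASR supplies `u1` making `(x1, x2, u1, u2)` an extended tuple, and then
`R(F1(x1, u1))` lies in `F2'(x2, u2)` by construction, which is exactly the WFRR condition. -/

section Extension

variable {X1 U1 X2 U2 : Type*} (F1 : X1 → U1 → Set X1) (F2 : X2 → U2 → Set X2)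
  (R : Set (X1 × X2))

theorem subset_extSys (x2 : X2) (u2 : U2) : F2 x2 u2 ⊆ extSys F1 F2 R x2 u2 :=
  subset_union_left

theorem img_subset_extSys {x1 : X1} {x2 : X2} {u1 : U1} {u2 : U2}
    (hext : extASR F1 F2 R x1 x2 u1 u2) : img R (F1 x1 u1) ⊆ extSys F1 F2 R x2 u2 :=
  fun _ hy => Or.inr (mem_iUnion₂_of_mem (i := x1) (j := u1) (mem_iUnion_of_mem hext hy))

theorem avail_extSys (x2 : X2) : avail (extSys F1 F2 R) x2 = avail F2 x2 := by
  ext u2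
  refine ⟨?_, fun hu2 => hu2.mono (subset_extSys F1 F2 R x2 u2)⟩
  rintro ⟨y, hy | hy⟩
  · exact ⟨y, hy⟩
  · obtain ⟨x1, u1, hext, -⟩ := by simpa only [mem_iUnion] using hy
    exact hext.2.1

variable {F1 F2 R} in
theorem ASR.exists_extASR (h : ASR F1 F2 R) {x1 : X1} {x2 : X2}
    (hR : (x1, x2) ∈ R) {u2 : U2} (hu2 : u2 ∈ avail F2 x2) :
    ∃ u1, extASR F1 F2 R x1 x2 u1 u2 := by
  obtain ⟨u1, hu1, hsucc⟩ := h x1 x2 hR u2 hu2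
  refine ⟨u1, hR, hu2, hu1, fun x1' hx1' => ?_⟩
  obtain ⟨x2', hx2', hR'⟩ := hsucc x1' hx1'
  exact ⟨x2', hR', hx2'⟩

variable {F1 F2 R} in
theorem ASR.wfrr_extSys (h : ASR F1 F2 R) : WFRR F1 (extSys F1 F2 R) R := by
  intro x1 x2 hR u2 hu2
  rw [avail_extSys] at hu2
  obtain ⟨u1, hext⟩ := h.exists_extASR hR hu2
  exact ⟨u1, hext.2.2.1, fun x1' hx1' x2' hR' => img_subset_extSys F1 F2 R hext ⟨x1', hx1', hR'⟩⟩

end Extension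

theorem WFRR_diagonal_of_subset {X U : Type*} {F G : X → U → Set X}
    (hsub : ∀ x u, F x u ⊆ G x u) (havail : ∀ x, avail G x ⊆ avail F x) :
    WFRR F G {p : X × X | p.1 = p.2} := by
  rintro x _ (rfl : x = _) u hu
  refine ⟨u, havail x hu, ?_⟩
  rintro x' hx' _ (rfl : x' = _)
  exact hsub x u hx'

/-- Any ASR abstraction can be completed into a WFRR abstraction by adding
transitions: the extension has the same available inputs, the identity is a WFRR
from `S2` to the extension, and `R` is a WFRR from `S1` to the extension. -/
theorem asr_to_wfrr_extension {X1 U1 X2 U2 : Type*}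
    (F1 : X1 → U1 → Set X1) (F2 : X2 → U2 → Set X2) (R : Set (X1 × X2))
    (h : ASR F1 F2 R) :
    (∀ x2, avail (extSys F1 F2 R) x2 = avail F2 x2) ∧
    WFRR F2 (extSys F1 F2 R) {p : X2 × X2 | p.1 = p.2} ∧
    WFRR F1 (extSys F1 F2 R) R := by
  have havail := avail_extSys F1 F2 R
  exact ⟨havail,
    WFRR_diagonal_of_subset (subset_extSys F1 F2 R) (fun x2 => (havail x2).le),
    h.wfrr_extSys⟩
end

section
/- Necessity of WFRR: let R be a strict ASR from S1 to S2 with interface I (mapping into the ASR extended relation). If for every static controller C2 for S2 the memoryless refined controller C1 = C2 ∘_I R satisfies that every R-quantization of every trajectory of C1 × S1 is a trajectory of C2 × S2 (the memoryless controlled-simulability property), then R is a WFRR from S1 to S2. -/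
open Set

/-- The memoryless refined controller `C1 = C2 ∘_I R`. -/
def refinedCtrl {X1 U1 X2 U2 : Type*} (R : Set (X1 × X2))
    (I : X1 → X2 → U2 → Set U1) (C2 : X2 → Set U2) (x1 : X1) : Set U1 :=
  ⋃ (x2 : X2) (_ : (x1, x2) ∈ R) (u2 : U2) (_ : u2 ∈ C2 x2), I x1 x2 u2

def ControlledSimulable {X1 U1 X2 U2 : Type*} (F1 : X1 → U1 → Set X1) (F2 : X2 → U2 → Set X2)
    (R : Set (X1 × X2)) (C1 : X1 → Set U1) (C2 : X2 → Set U2) : Prop :=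
  ∀ T (x1 : ℕ → X1) (u1 : ℕ → U1),
    (∀ k < T, u1 k ∈ C1 (x1 k) ∧ x1 (k + 1) ∈ F1 (x1 k) (u1 k)) →
    ∀ x2 : ℕ → X2, (∀ k ≤ T, (x1 k, x2 k) ∈ R) →
      ∃ u2 : ℕ → U2, ∀ k < T, u2 k ∈ C2 (x2 k) ∧ x2 (k + 1) ∈ F2 (x2 k) (u2 k)

theorem ControlledSimulable.exists_step {X1 U1 X2 U2 : Type*} {F1 : X1 → U1 → Set X1}
    {F2 : X2 → U2 → Set X2} {R : Set (X1 × X2)} {C1 : X1 → Set U1} {C2 : X2 → Set U2}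
    (h : ControlledSimulable F1 F2 R C1 C2) {x1 x1' : X1} {x2 x2' : X2} {u1 : U1}
    (hu1 : u1 ∈ C1 x1) (hx1' : x1' ∈ F1 x1 u1) (hR : (x1, x2) ∈ R) (hR' : (x1', x2') ∈ R) :
    ∃ u2 ∈ C2 x2, x2' ∈ F2 x2 u2 := by
  have hstep1 : ∀ k < 1, u1 ∈ C1 (if k = 0 then x1 else x1') ∧
      (if k + 1 = 0 then x1 else x1') ∈ F1 (if k = 0 then x1 else x1') u1 := by
    intro k hk
    obtain rfl : k = 0 := by omega
    simpa using ⟨hu1, hx1'⟩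
  have hquant : ∀ k ≤ 1, (if k = 0 then x1 else x1', if k = 0 then x2 else x2') ∈ R := by
    intro k hk
    interval_cases k <;> simpa
  obtain ⟨u2, hu2⟩ := h 1 _ (fun _ => u1) hstep1 _ hquant
  exact ⟨u2 0, hu2 0 one_pos⟩

theorem mem_refinedCtrl {X1 U1 X2 U2 : Type*} {R : Set (X1 × X2)}
    {I : X1 → X2 → U2 → Set U1} {C2 : X2 → Set U2} {x1 : X1} {x2 : X2} {u1 : U1} {u2 : U2}
    (hR : (x1, x2) ∈ R) (hu2 : u2 ∈ C2 x2) (hu1 : u1 ∈ I x1 x2 u2) :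
    u1 ∈ refinedCtrl R I C2 x1 := by
  simp only [refinedCtrl, mem_iUnion]
  exact ⟨x2, hR, u2, hu2, hu1⟩

def pinnedCtrl {X2 U2 : Type*} (F2 : X2 → U2 → Set X2) (x2 : X2) (u2 : U2) (y : X2) : Set U2 :=
  {u ∈ avail F2 y | y = x2 → u = u2}

section pinnedCtrl

variable {X2 U2 : Type*} {F2 : X2 → U2 → Set X2} {x2 : X2} {u2 : U2}

theorem mem_pinnedCtrl_self (hu2 : u2 ∈ avail F2 x2) : u2 ∈ pinnedCtrl F2 x2 u2 x2 :=
  ⟨hu2, fun _ => rfl⟩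

theorem eq_of_mem_pinnedCtrl_self {u : U2} (hu : u ∈ pinnedCtrl F2 x2 u2 x2) : u = u2 :=
  hu.2 rfl

theorem pinnedCtrl_admissible (hnb2 : ∀ y, (avail F2 y).Nonempty) (hu2 : u2 ∈ avail F2 x2)
    (y : X2) : (pinnedCtrl F2 x2 u2 y).Nonempty ∧ pinnedCtrl F2 x2 u2 y ⊆ avail F2 y := by
  refine ⟨?_, fun _ hu => hu.1⟩
  by_cases hy : y = x2
  · subst hy
    exact ⟨u2, mem_pinnedCtrl_self hu2⟩
  · obtain ⟨u, hu⟩ := hnb2 y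
    exact ⟨u, hu, fun h => absurd h hy⟩

end pinnedCtrl

theorem wfrr_necessary_general {X1 U1 X2 U2 : Type*}
    (F1 : X1 → U1 → Set X1) (F2 : X2 → U2 → Set X2) (R : Set (X1 × X2))
    (hnb2 : ∀ x2, (avail F2 x2).Nonempty)
    (I : X1 → X2 → U2 → Set U1)
    (hI : ∀ x1 x2, (x1, x2) ∈ R → ∀ u2 ∈ avail F2 x2,
      (I x1 x2 u2).Nonempty ∧ I x1 x2 u2 ⊆ {u1 | extASR F1 F2 R x1 x2 u1 u2})
    (hprop : ∀ C2 : X2 → Set U2, (∀ x2, (C2 x2).Nonempty ∧ C2 x2 ⊆ avail F2 x2) →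
      ∀ T (x1 : ℕ → X1) (u1 : ℕ → U1),
        (∀ k < T, u1 k ∈ refinedCtrl R I C2 (x1 k) ∧ x1 (k + 1) ∈ F1 (x1 k) (u1 k)) →
        ∀ x2 : ℕ → X2, (∀ k ≤ T, (x1 k, x2 k) ∈ R) →
          ∃ u2 : ℕ → U2, ∀ k < T, u2 k ∈ C2 (x2 k) ∧ x2 (k + 1) ∈ F2 (x2 k) (u2 k)) :
    WFRR F1 F2 R := by
  intro x1 x2 hR u2 hu2
  obtain ⟨⟨u1, hu1I⟩, hIext⟩ := hI x1 x2 hR u2 hu2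
  obtain ⟨-, -, hu1, -⟩ := hIext hu1I
  refine ⟨u1, hu1, fun x1' hx1' x2' hR' => ?_⟩
  have hsim : ControlledSimulable F1 F2 R (refinedCtrl R I (pinnedCtrl F2 x2 u2))
      (pinnedCtrl F2 x2 u2) := hprop _ (pinnedCtrl_admissible hnb2 hu2)
  obtain ⟨v, hv, hstep⟩ :=
    hsim.exists_step (mem_refinedCtrl hR (mem_pinnedCtrl_self hu2) hu1I) hx1' hR hR'
  rwa [eq_of_mem_pinnedCtrl_self hv] at hstep

/-- Necessity: if the memoryless concretization scheme works for every abstract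
static controller, then `R` must be a WFRR. -/
theorem wfrr_necessary {X1 U1 X2 U2 : Type*}
    (F1 : X1 → U1 → Set X1) (F2 : X2 → U2 → Set X2) (R : Set (X1 × X2))
    (hnb2 : ∀ x2, (avail F2 x2).Nonempty)
    (hstrict : Strict R) (hASR : ASR F1 F2 R)
    (I : X1 → X2 → U2 → Set U1)
    (hI : ∀ x1 x2, (x1, x2) ∈ R → ∀ u2 ∈ avail F2 x2,
      (I x1 x2 u2).Nonempty ∧ I x1 x2 u2 ⊆ {u1 | extASR F1 F2 R x1 x2 u1 u2})
    (hprop : ∀ C2 : X2 → Set U2, (∀ x2, (C2 x2).Nonempty ∧ C2 x2 ⊆ avail F2 x2) →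
      ∀ T (x1 : ℕ → X1) (u1 : ℕ → U1),
        (∀ k < T, u1 k ∈ refinedCtrl R I C2 (x1 k) ∧ x1 (k + 1) ∈ F1 (x1 k) (u1 k)) →
        ∀ x2 : ℕ → X2, (∀ k ≤ T, (x1 k, x2 k) ∈ R) →
          ∃ u2 : ℕ → U2, ∀ k < T, u2 k ∈ C2 (x2 k) ∧ x2 (k + 1) ∈ F2 (x2 k) (u2 k)) :
    WFRR F1 F2 R :=
  wfrr_necessary_general F1 F2 R hnb2 I hI hprop
end
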